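/- Let (aₙ) and (uₙ) be sequences of reals with 0 ≤ uₙ ≤ 1, aₙ → 1, and let u^∞ ∈ (0,1]. Suppose rₙ > 0 with rₙ → u^∞. Then aₙ uₙ log(aₙ uₙ / rₙ) − uₙ log(uₙ/u^∞) → 0, where terms with uₙ = 0 are interpreted as 0. -/

import Mathlib

/-!
Away from `u = 0` the logarithm splits as `log (a u / r) = log (a c / r) + log (u / c)`, so
`a u log (a u / r) - u log (u / c) = a log (a c / r) · u + (a - 1) · u log (u / c)`,
an identity that also holds at `u = 0`. Both summands are a null sequence times a bounded one:
`a log (a c / r) → log 1 = 0` while `u ∈ [0, 1]`, and `a - 1 → 0` while `u log (u / c)` is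
bounded, being a continuous function of `u` on the compact interval `[0, 1]`.
-/

open Filter Real

lemma mul_log_div_sub_mul_log_div {a u r c : ℝ} (ha : a ≠ 0) (hr : r ≠ 0) (hc : c ≠ 0) :
    a * u * log (a * u / r) - u * log (u / c)
      = a * log (a * c / r) * u + (a - 1) * (u * log (u / c)) := by
  rcases eq_or_ne u 0 with rfl | hu
  · simp
  · rw [show a * u / r = a * c / r * (u / c) by field_simp,
      log_mul (by positivity) (by positivity)]
    ring

lemma continuous_mul_log_div {c : ℝ} (hc : c ≠ 0) : Continuous fun x => x * log (x / c) := by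
  have h : (fun x => x * log (x / c)) = fun x => c * (x / c * log (x / c)) := by
    funext x
    field_simp
  rw [h]
  exact (continuous_mul_log.comp (continuous_id.div_const c)).const_mul c

lemma isBoundedUnder_mul_log_div {ι : Type*} {l : Filter ι} {u : ι → ℝ} {c : ℝ} (hc : c ≠ 0)
    (hu : ∀ n, u n ∈ Set.Icc (0 : ℝ) 1) :
    IsBoundedUnder (· ≤ ·) l ((‖·‖) ∘ fun n => u n * log (u n / c)) := by
  obtain ⟨C, hC⟩ :=
    isCompact_Icc.exists_bound_of_continuousOn (continuous_mul_log_div hc).continuousOn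
  exact isBoundedUnder_of ⟨C, fun n => hC _ (hu n)⟩

lemma isBoundedUnder_norm_of_mem_Icc {ι : Type*} {l : Filter ι} {u : ι → ℝ}
    (hu : ∀ n, u n ∈ Set.Icc (0 : ℝ) 1) : IsBoundedUnder (· ≤ ·) l ((‖·‖) ∘ u) :=
  isBoundedUnder_of ⟨1, fun n => by simpa [abs_of_nonneg (hu n).1] using (hu n).2⟩

theorem stmt14_general (a u r : ℕ → ℝ) (uinf : ℝ)
    (hu : ∀ n, u n ∈ Set.Icc (0:ℝ) 1)
    (ha : Tendsto a atTop (nhds 1))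
    (huinf : uinf ∈ Set.Ioc (0:ℝ) 1)
    (hr : Tendsto r atTop (nhds uinf)) :
    Tendsto (fun n =>
        a n * u n * Real.log (a n * u n / r n) - u n * Real.log (u n / uinf))
      atTop (nhds 0) := by
  have hc : uinf ≠ 0 := huinf.1.ne'
  have hlog : Tendsto (fun n => a n * log (a n * uinf / r n)) atTop (nhds 0) := by
    simpa [hc] using ha.mul (((ha.mul_const uinf).div hr hc).log (by simpa using hc))
  have ha1 : Tendsto (fun n => a n - 1) atTop (nhds 0) := by
    simpa using ha.sub_const 1
  have hsum := (hlog.zero_mul_isBoundedUnder_le (isBoundedUnder_norm_of_mem_Icc hu)).add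
    (ha1.zero_mul_isBoundedUnder_le (isBoundedUnder_mul_log_div hc hu))
  rw [add_zero] at hsum
  refine hsum.congr' ?_
  filter_upwards [ha.eventually_ne one_ne_zero, hr.eventually_ne hc] with n han hrn
  exact (mul_log_div_sub_mul_log_div han hrn hc).symm

/-- Algebraic core of the key lemma: if aₙ → 1, 0 ≤ uₙ ≤ 1, rₙ > 0,
rₙ → u^∞ ∈ (0,1], then aₙuₙ log(aₙuₙ/rₙ) − uₙ log(uₙ/u^∞) → 0
(with the convention 0·log 0 = 0, i.e. Mathlib's `Real.log 0 = 0`). -/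
theorem stmt14 (a u r : ℕ → ℝ) (uinf : ℝ)
    (hu : ∀ n, u n ∈ Set.Icc (0:ℝ) 1)
    (hapos : ∀ n, 0 < a n)
    (ha : Tendsto a atTop (nhds 1))
    (hrpos : ∀ n, 0 < r n)
    (huinf : uinf ∈ Set.Ioc (0:ℝ) 1)
    (hr : Tendsto r atTop (nhds uinf)) :
    Tendsto (fun n =>
        a n * u n * Real.log (a n * u n / r n) - u n * Real.log (u n / uinf))
      atTop (nhds 0) :=
  stmt14_general a u r uinf hu ha huinf hr
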